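/- arXiv:1401.7053 — 2 statements merged into one kernel-verified Lean document; each statement's English description precedes it below -/
import Mathlib

section
/- Let ζ be on the unit circle, φ ∈ H^∞(𝔻), and f ∈ D(δ_ζ) with f(ζ) ≠ 0. If φf ∈ D(δ_ζ), then φ ∈ D(δ_ζ), and moreover |f(ζ)|² D_ζ(φ) ≤ 2(‖φ‖_∞² D_ζ(f) + D_ζ(φf)). -/
open Complex MeasureTheory Metric Set Filter
open scoped ENNReal Topology

noncomputable section

/-- The open unit disc in `ℂ`. -/
def oDisc : Set ℂ := Metric.ball 0 1

/-- Squared `H²` norm (extended-real valued):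
`sup_{0<r<1} (1/2π) ∫₀^{2π} ‖f(r e^{it})‖² dt`. -/
def h2E (f : ℂ → ℂ) : ℝ≥0∞ :=
  ⨆ r : Set.Ioo (0:ℝ) 1,
    ENNReal.ofReal ((2 * Real.pi)⁻¹ * ∫ t in (0:ℝ)..(2 * Real.pi),
      ‖f ((r.1 : ℂ) * Complex.exp ((t : ℂ) * Complex.I))‖ ^ 2)

/-- Membership in the Hardy space `H²(𝔻)`. -/
def MemH2 (f : ℂ → ℂ) : Prop := DifferentiableOn ℂ f oDisc ∧ h2E f < ⊤

/-- Squared `H²` norm, real valued. -/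
def h2normSq (f : ℂ → ℂ) : ℝ := (h2E f).toReal

/-- Membership in the Dirichlet-type space `D(δ_ζ)`:
`f` admits a decomposition `f = c + (z-ζ) g` with `g ∈ H²`. -/
def MemD (ζ : ℂ) (f : ℂ → ℂ) : Prop :=
  ∃ c : ℂ, ∃ g : ℂ → ℂ, MemH2 g ∧ ∀ z ∈ oDisc, f z = c + (z - ζ) * g z

open scoped Classical in
/-- The local Dirichlet integral of `h` at `ζ` (extended-real valued): the squared `H²`
norm of `(h - h(ζ))/(z-ζ)` when such a decomposition exists, `⊤` otherwise. -/
def Dloc (ζ : ℂ) (h : ℂ → ℂ) : ℝ≥0∞ :=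
  if hd : ∃ p : ℂ × (ℂ → ℂ), MemH2 p.2 ∧ ∀ z ∈ oDisc, h z = p.1 + (z - ζ) * p.2 z
  then h2E hd.choose.2 else ⊤

lemma mem_oDisc_aux {r : ℝ} (hr : r ∈ Set.Ioo (0:ℝ) 1) (t : ℝ) :
    (r : ℂ) * Complex.exp ((t:ℂ) * Complex.I) ∈ oDisc := by
  simp only [oDisc, Metric.mem_ball, dist_zero_right, norm_mul,
    Complex.norm_exp_ofReal_mul_I, Complex.norm_real, Real.norm_eq_abs,
    _root_.abs_of_nonneg hr.1.le, mul_one]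
  exact hr.2

lemma curve_cont (r : ℝ) : Continuous fun t : ℝ => (r : ℂ) * Complex.exp ((t:ℂ) * Complex.I) :=
  continuous_const.mul (Complex.continuous_exp.comp (Complex.continuous_ofReal.mul continuous_const))

lemma h2E_congr {u v : ℂ → ℂ} (h : ∀ z ∈ oDisc, u z = v z) : h2E u = h2E v := by
  refine iSup_congr fun r => ?_
  congr 2
  refine intervalIntegral.integral_congr fun t _ => ?_
  rw [h _ (mem_oDisc_aux r.2 t)]

lemma h2E_le {h u v : ℂ → ℂ} {a b : ℝ} (ha : 0 ≤ a) (hb : 0 ≤ b)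
    (hh : ContinuousOn h oDisc) (hu : ContinuousOn u oDisc) (hv : ContinuousOn v oDisc)
    (hpt : ∀ z ∈ oDisc, ‖h z‖ ^ 2 ≤ a * ‖u z‖ ^ 2 + b * ‖v z‖ ^ 2) :
    h2E h ≤ ENNReal.ofReal a * h2E u + ENNReal.ofReal b * h2E v := by
  refine iSup_le fun r => ?_
  set γ : ℝ → ℂ := fun t => (r.1 : ℂ) * Complex.exp ((t:ℂ) * Complex.I) with hγ
  have hmem : ∀ t, γ t ∈ oDisc := fun t => mem_oDisc_aux r.2 t
  have hch : Continuous fun t => ‖h (γ t)‖ ^ 2 :=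
    ((hh.comp_continuous (curve_cont r.1) hmem).norm.pow 2)
  have hcu : Continuous fun t => ‖u (γ t)‖ ^ 2 :=
    ((hu.comp_continuous (curve_cont r.1) hmem).norm.pow 2)
  have hcv : Continuous fun t => ‖v (γ t)‖ ^ 2 :=
    ((hv.comp_continuous (curve_cont r.1) hmem).norm.pow 2)
  have hpi : (0:ℝ) ≤ 2 * Real.pi := by positivity
  have hih : IntervalIntegrable (fun t => ‖h (γ t)‖ ^ 2) MeasureTheory.volume (0:ℝ) (2*Real.pi) :=
    hch.intervalIntegrable (0:ℝ) (2*Real.pi)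
  set Iu := ∫ t in (0:ℝ)..(2*Real.pi), ‖u (γ t)‖ ^ 2 with hIu
  set Iv := ∫ t in (0:ℝ)..(2*Real.pi), ‖v (γ t)‖ ^ 2 with hIv
  have hIu0 : 0 ≤ Iu := intervalIntegral.integral_nonneg hpi (fun x _ => by positivity)
  have hIv0 : 0 ≤ Iv := intervalIntegral.integral_nonneg hpi (fun x _ => by positivity)
  have h1 : (∫ t in (0:ℝ)..(2*Real.pi), ‖h (γ t)‖ ^ 2) ≤ a * Iu + b * Iv := by
    have := intervalIntegral.integral_mono_on hpi hih
      (((continuous_const.mul hcu).add (continuous_const.mul hcv)).intervalIntegrable 0 (2*Real.pi))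
      (fun t _ => hpt _ (hmem t))
    calc (∫ t in (0:ℝ)..(2*Real.pi), ‖h (γ t)‖ ^ 2)
        ≤ ∫ t in (0:ℝ)..(2*Real.pi), (a * ‖u (γ t)‖ ^ 2 + b * ‖v (γ t)‖ ^ 2) := this
      _ = a * Iu + b * Iv := by
          rw [intervalIntegral.integral_add ((hcu.intervalIntegrable _ _).const_mul a)
            ((hcv.intervalIntegrable _ _).const_mul b),
            intervalIntegral.integral_const_mul, intervalIntegral.integral_const_mul]
  calc ENNReal.ofReal ((2*Real.pi)⁻¹ * ∫ t in (0:ℝ)..(2*Real.pi), ‖h (γ t)‖ ^ 2)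
      ≤ ENNReal.ofReal (a * ((2*Real.pi)⁻¹ * Iu) + b * ((2*Real.pi)⁻¹ * Iv)) := by
        apply ENNReal.ofReal_le_ofReal
        calc (2*Real.pi)⁻¹ * ∫ t in (0:ℝ)..(2*Real.pi), ‖h (γ t)‖ ^ 2
            ≤ (2*Real.pi)⁻¹ * (a * Iu + b * Iv) := by
              apply mul_le_mul_of_nonneg_left h1 (by positivity)
          _ = a * ((2*Real.pi)⁻¹ * Iu) + b * ((2*Real.pi)⁻¹ * Iv) := by ring
    _ ≤ ENNReal.ofReal a * h2E u + ENNReal.ofReal b * h2E v := by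
        rw [ENNReal.ofReal_add (by positivity) (by positivity),
          ENNReal.ofReal_mul ha, ENNReal.ofReal_mul hb]
        gcongr
        · exact le_iSup (fun r : Set.Ioo (0:ℝ) 1 => ENNReal.ofReal ((2 * Real.pi)⁻¹ *
            ∫ t in (0:ℝ)..(2 * Real.pi), ‖u ((r.1 : ℂ) * Complex.exp ((t : ℂ) * Complex.I))‖ ^ 2)) r
        · exact le_iSup (fun r : Set.Ioo (0:ℝ) 1 => ENNReal.ofReal ((2 * Real.pi)⁻¹ *
            ∫ t in (0:ℝ)..(2 * Real.pi), ‖v ((r.1 : ℂ) * Complex.exp ((t : ℂ) * Complex.I))‖ ^ 2)) r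

lemma exp_close {θ s : ℝ} (hθ1 : -Real.pi < θ) (hθ2 : θ ≤ Real.pi) (hs0 : 0 < s)
    (hs : s ≤ 1/2) {t : ℝ}
    (ht : t ∈ Set.Icc (if 0 ≤ θ then θ else θ + 2*Real.pi - s)
      ((if 0 ≤ θ then θ else θ + 2*Real.pi - s) + s)) :
    ‖Complex.exp ((t:ℂ) * Complex.I) - Complex.exp ((θ:ℂ) * Complex.I)‖ ≤ 2 * s := by
  have key : ∀ u : ℝ, |u| ≤ s → Complex.exp (((θ + u : ℝ):ℂ) * Complex.I)
      = Complex.exp ((t:ℂ) * Complex.I) →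
      ‖Complex.exp ((t:ℂ) * Complex.I) - Complex.exp ((θ:ℂ) * Complex.I)‖ ≤ 2 * s := by
    intro u hu he
    have h1 : Complex.exp ((t:ℂ) * Complex.I) - Complex.exp ((θ:ℂ) * Complex.I)
        = Complex.exp ((θ:ℂ) * Complex.I) * (Complex.exp ((u:ℝ) * Complex.I) - 1) := by
      rw [← he]
      push_cast
      rw [mul_sub, mul_one, ← Complex.exp_add]
      ring_nf
    rw [h1, norm_mul, Complex.norm_exp_ofReal_mul_I, one_mul]
    have habs : ‖(u:ℂ) * Complex.I‖ = |u| := by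
      simp
    calc ‖Complex.exp ((u:ℝ) * Complex.I) - 1‖ ≤ 2 * ‖(u:ℂ) * Complex.I‖ := by
          exact Complex.norm_exp_sub_one_le (by rw [habs]; linarith)
      _ = 2 * |u| := by rw [habs]
      _ ≤ 2 * s := by linarith
  by_cases hθ : 0 ≤ θ
  · simp only [if_pos hθ] at ht
    refine key (t - θ) ?_ ?_
    · rw [abs_le]; constructor <;> linarith [ht.1, ht.2]
    · push_cast; ring_nf
  · simp only [if_neg hθ] at ht
    refine key (t - θ - 2*Real.pi) ?_ ?_
    · rw [abs_le]; constructor <;> linarith [ht.1, ht.2]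
    · have : ((θ + (t - θ - 2*Real.pi) : ℝ):ℂ) * Complex.I
          = (t:ℂ) * Complex.I - 2*Real.pi*Complex.I := by push_cast; ring
      rw [this, Complex.exp_sub, Complex.exp_two_pi_mul_I, div_one]

lemma h2E_eq_top (ζ : ℂ) (hζ : ‖ζ‖ = 1) (a : ℂ) (ha : a ≠ 0) (w : ℂ → ℂ)
    (hw : ContinuousOn w oDisc) (hdw : ∀ z ∈ oDisc, (z - ζ) * w z = a) :
    h2E w = ⊤ := by
  have hπ := Real.pi_pos
  set θ := Complex.arg ζ with hθdef
  have hζe : Complex.exp ((θ:ℂ) * Complex.I) = ζ := by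
    have := Complex.norm_mul_exp_arg_mul_I ζ
    rwa [hζ, Complex.ofReal_one,
      one_mul] at this
  have hθ1 : -Real.pi < θ := Complex.neg_pi_lt_arg ζ
  have hθ2 : θ ≤ Real.pi := Complex.arg_le_pi ζ
  -- key estimate
  have h3π := Real.pi_gt_three
  have key : ∀ r : ℝ, r ∈ Set.Ioo (0:ℝ) 1 → 1/2 ≤ r →
      ENNReal.ofReal (‖a‖^2 / (18 * Real.pi * (1 - r))) ≤ h2E w := by
    intro r hr hr2
    set s := 1 - r with hs
    have hs0 : 0 < s := by simp [hs]; exact hr.2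
    have hs12 : s ≤ 1/2 := by simp [hs]; linarith
    set α := if 0 ≤ θ then θ else θ + 2*Real.pi - s with hα
    have hα0 : 0 ≤ α := by
      by_cases hθ : 0 ≤ θ
      · simp only [hα, if_pos hθ]; exact hθ
      · simp only [hα, if_neg hθ]; linarith
    have hα1 : α + s ≤ 2*Real.pi := by
      by_cases hθ : 0 ≤ θ
      · simp only [hα, if_pos hθ]; linarith
      · simp only [hα, if_neg hθ]; linarith [not_le.mp hθ]
    set γ : ℝ → ℂ := fun t => (r : ℂ) * Complex.exp ((t:ℂ) * Complex.I) with hγ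
    have hmem : ∀ t, γ t ∈ oDisc := fun t => mem_oDisc_aux hr t
    -- distance bound on the window
    have hdist : ∀ t ∈ Set.Icc α (α + s), ‖γ t - ζ‖ ≤ 3 * s := by
      intro t ht
      have h2 : ‖Complex.exp ((t:ℂ) * Complex.I) - Complex.exp ((θ:ℂ) * Complex.I)‖ ≤ 2*s :=
        exp_close hθ1 hθ2 hs0 hs12 ht
      calc ‖γ t - ζ‖ = ‖(r:ℂ) * (Complex.exp ((t:ℂ)*Complex.I) - Complex.exp ((θ:ℂ)*Complex.I))
              + ((r:ℂ) - 1) * Complex.exp ((θ:ℂ)*Complex.I)‖ := by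
            rw [← hζe]; congr 1; simp only [hγ]; ring
        _ ≤ ‖(r:ℂ)‖ * ‖Complex.exp ((t:ℂ)*Complex.I) - Complex.exp ((θ:ℂ)*Complex.I)‖
              + ‖(r:ℂ) - 1‖ * ‖Complex.exp ((θ:ℂ)*Complex.I)‖ := by
            refine (norm_add_le _ _).trans ?_
            rw [norm_mul, norm_mul]
        _ ≤ 1 * (2*s) + s * 1 := by
            have h3 : ‖(r:ℂ)‖ ≤ 1 := by
              rw [Complex.norm_real, Real.norm_eq_abs, _root_.abs_of_nonneg hr.1.le]; exact hr.2.le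
            have h4 : ‖(r:ℂ) - 1‖ = s := by
              rw [show (r:ℂ) - 1 = ((r - 1 : ℝ):ℂ) by push_cast; ring, Complex.norm_real,
                Real.norm_eq_abs, abs_of_nonpos (by linarith [hr.2] : r - 1 ≤ 0)]
              simp [hs]
            rw [Complex.norm_exp_ofReal_mul_I, h4]
            have := norm_nonneg (Complex.exp ((t:ℂ)*Complex.I) - Complex.exp ((θ:ℂ)*Complex.I))
            nlinarith
        _ = 3 * s := by ring
    -- pointwise lower bound
    have hlow : ∀ t ∈ Set.Icc α (α + s), ‖a‖^2/(9*s^2) ≤ ‖w (γ t)‖^2 := by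
      intro t ht
      have hna : ‖γ t - ζ‖ * ‖w (γ t)‖ = ‖a‖ := by
        rw [← norm_mul, hdw _ (hmem t)]
      have hd3 := hdist t ht
      have hdpos : 0 < ‖γ t - ζ‖ := by
        rw [norm_pos_iff, sub_ne_zero]
        intro h0
        have hmt := hmem t
        rw [oDisc, Metric.mem_ball, dist_zero_right, h0, hζ] at hmt
        exact lt_irrefl _ hmt
      have hwt : ‖a‖/(3*s) ≤ ‖w (γ t)‖ := by
        rw [div_le_iff₀ (by linarith : (0:ℝ) < 3*s)]
        calc ‖a‖ = ‖γ t - ζ‖ * ‖w (γ t)‖ := hna.symm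
          _ ≤ (3*s) * ‖w (γ t)‖ := by
              apply mul_le_mul_of_nonneg_right hd3 (norm_nonneg _)
          _ = ‖w (γ t)‖ * (3*s) := by ring
      calc ‖a‖^2/(9*s^2) = (‖a‖/(3*s))^2 := by rw [div_pow]; ring_nf
        _ ≤ ‖w (γ t)‖^2 := by
            apply pow_le_pow_left₀ (div_nonneg (norm_nonneg a) (by linarith)) hwt
    -- integral chain
    have hcw : Continuous fun t => ‖w (γ t)‖ ^ 2 :=
      ((hw.comp_continuous (curve_cont r) hmem).norm.pow 2)
    have hiw : IntervalIntegrable (fun t => ‖w (γ t)‖ ^ 2) MeasureTheory.volume (0:ℝ)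
        (2*Real.pi) := hcw.intervalIntegrable _ _
    have hint1 : (∫ t in α..(α+s), ‖w (γ t)‖ ^ 2) ≤ ∫ t in (0:ℝ)..(2*Real.pi), ‖w (γ t)‖ ^ 2 :=
      intervalIntegral.integral_mono_interval hα0 (by linarith) hα1
        (Filter.Eventually.of_forall fun t => by positivity) hiw
    have hint2 : ‖a‖^2/(9*s) ≤ ∫ t in α..(α+s), ‖w (γ t)‖ ^ 2 := by
      have := intervalIntegral.integral_mono_on (by linarith : α ≤ α + s)
        (intervalIntegrable_const (μ := MeasureTheory.volume)) (hcw.intervalIntegrable _ _) hlow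
      calc ‖a‖^2/(9*s) = ((α+s) - α) * (‖a‖^2/(9*s^2)) := by
            rw [show (α+s) - α = s from by ring]
            rw [eq_comm, ← mul_div_assoc]
            rw [div_eq_div_iff (by nlinarith : (0:ℝ) < 9*s^2).ne' (by nlinarith : (0:ℝ) < 9*s).ne']
            ring
        _ = ∫ _ in α..(α+s), ‖a‖^2/(9*s^2) := by
            rw [intervalIntegral.integral_const, smul_eq_mul]
        _ ≤ _ := this
    have hmean : ‖a‖^2 / (18 * Real.pi * (1 - r)) ≤
        (2 * Real.pi)⁻¹ * ∫ t in (0:ℝ)..(2*Real.pi), ‖w (γ t)‖ ^ 2 := by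
      have h5 : ‖a‖^2/(9*s) ≤ ∫ t in (0:ℝ)..(2*Real.pi), ‖w (γ t)‖ ^ 2 :=
        hint2.trans hint1
      calc ‖a‖^2 / (18 * Real.pi * (1 - r)) = (2*Real.pi)⁻¹ * (‖a‖^2/(9*s)) := by
            rw [← hs, inv_mul_eq_div, div_div]
            ring_nf
        _ ≤ _ := by
            apply mul_le_mul_of_nonneg_left h5 (by positivity)
    refine le_trans (ENNReal.ofReal_le_ofReal hmean) ?_
    exact le_iSup (fun r : Set.Ioo (0:ℝ) 1 => ENNReal.ofReal ((2 * Real.pi)⁻¹ *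
      ∫ t in (0:ℝ)..(2 * Real.pi), ‖w ((r.1 : ℂ) * Complex.exp ((t : ℂ) * Complex.I))‖ ^ 2))
      (⟨r, hr⟩ : Set.Ioo (0:ℝ) 1)
  -- conclude
  by_contra hne
  set K := (h2E w).toReal with hK
  have hK0 : 0 ≤ K := ENNReal.toReal_nonneg
  have hapos : 0 < ‖a‖^2 := pow_pos (norm_pos_iff.mpr ha) 2
  set ε := ‖a‖^2 / (18 * Real.pi * (K + 1)) with hε
  have hε0 : 0 < ε := div_pos hapos (mul_pos (by positivity) (by linarith))
  set r := max (1/2) (1 - ε) with hr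
  have hr1 : r < 1 := by
    apply max_lt (by norm_num) (by linarith)
  have hrIoo : r ∈ Set.Ioo (0:ℝ) 1 := ⟨lt_of_lt_of_le (by norm_num) (le_max_left _ _), hr1⟩
  have hr2 : 1/2 ≤ r := le_max_left _ _
  have h1r : 0 < 1 - r := by linarith
  have h1rε : 1 - r ≤ ε := by
    have := le_max_right (1/2 : ℝ) (1 - ε); linarith
  have hbig : K + 1 ≤ ‖a‖^2 / (18 * Real.pi * (1 - r)) := by
    rw [le_div_iff₀ (mul_pos (by positivity) h1r)]
    calc (K+1) * (18 * Real.pi * (1 - r)) ≤ (K+1) * (18 * Real.pi * ε) := by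
          apply mul_le_mul_of_nonneg_left _ (by positivity)
          apply mul_le_mul_of_nonneg_left h1rε (by positivity)
      _ = ‖a‖^2 := by
          have hK1 : (K:ℝ) + 1 ≠ 0 := by positivity
          rw [hε]
          field_simp
  have := key r hrIoo hr2
  have h6 : ENNReal.ofReal (K + 1) ≤ h2E w :=
    le_trans (ENNReal.ofReal_le_ofReal hbig) this
  rw [ENNReal.ofReal_le_iff_le_toReal hne] at h6
  linarith

lemma ne_zeta {ζ z : ℂ} (hζ : ‖ζ‖ = 1) (hz : z ∈ oDisc) : z - ζ ≠ 0 := by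
  intro h0
  rw [oDisc, Metric.mem_ball, dist_zero_right, sub_eq_zero.mp h0, hζ] at hz
  exact lt_irrefl _ hz

lemma dec_unique (ζ : ℂ) (hζ : ‖ζ‖ = 1) {f : ℂ → ℂ} {c1 c2 : ℂ} {g1 g2 : ℂ → ℂ}
    (h1 : MemH2 g1) (h2 : MemH2 g2)
    (d1 : ∀ z ∈ oDisc, f z = c1 + (z - ζ) * g1 z)
    (d2 : ∀ z ∈ oDisc, f z = c2 + (z - ζ) * g2 z) :
    c1 = c2 ∧ ∀ z ∈ oDisc, g1 z = g2 z := by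
  have hkey : ∀ z ∈ oDisc, (z - ζ) * (g1 z - g2 z) = c2 - c1 := by
    intro z hz
    have e1 := d1 z hz
    have e2 := d2 z hz
    rw [e1] at e2
    linear_combination e2
  have hcc : c1 = c2 := by
    by_contra hne
    have htop := h2E_eq_top ζ hζ (c2 - c1) (sub_ne_zero.mpr (Ne.symm hne))
      (fun z => g1 z - g2 z) (h1.1.continuousOn.sub h2.1.continuousOn) hkey
    have hle := h2E_le (h := fun z => g1 z - g2 z) (u := g1) (v := g2)
      (by norm_num : (0:ℝ) ≤ 2) (by norm_num : (0:ℝ) ≤ 2)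
      (h1.1.continuousOn.sub h2.1.continuousOn) h1.1.continuousOn h2.1.continuousOn
      (fun z _ => by
        show ‖g1 z - g2 z‖ ^ 2 ≤ 2 * ‖g1 z‖ ^ 2 + 2 * ‖g2 z‖ ^ 2
        have hn := norm_sub_le (g1 z) (g2 z)
        have h1' := norm_nonneg (g1 z)
        have h2' := norm_nonneg (g2 z)
        have hsq : ‖g1 z - g2 z‖^2 ≤ (‖g1 z‖+‖g2 z‖)^2 := pow_le_pow_left₀ (norm_nonneg _) hn 2
        nlinarith [sq_nonneg (‖g1 z‖ - ‖g2 z‖)])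
    rw [htop, top_le_iff] at hle
    have : ENNReal.ofReal 2 * h2E g1 + ENNReal.ofReal 2 * h2E g2 < ⊤ :=
      ENNReal.add_lt_top.mpr ⟨ENNReal.mul_lt_top ENNReal.ofReal_lt_top h1.2,
        ENNReal.mul_lt_top ENNReal.ofReal_lt_top h2.2⟩
    rw [hle] at this
    exact lt_irrefl _ this
  refine ⟨hcc, fun z hz => ?_⟩
  have := hkey z hz
  rw [hcc, sub_self] at this
  rcases mul_eq_zero.mp this with h | h
  · exact absurd h (ne_zeta hζ hz)
  · exact sub_eq_zero.mp h

/-- For `ζ ∈ 𝕋`, `φ ∈ H^∞`, `f ∈ D(δ_ζ)` with `f(ζ) = c ≠ 0`: if `φ f ∈ D(δ_ζ)` then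
`φ ∈ D(δ_ζ)`, and `|f(ζ)|² D_ζ(φ) ≤ 2 (‖φ‖_∞² D_ζ(f) + D_ζ(φ f))`. -/
theorem stmt4 (ζ : ℂ) (hζ : ‖ζ‖ = 1) (φ f g : ℂ → ℂ) (Cφ : ℝ) (c : ℂ)
    (hφa : DifferentiableOn ℂ φ oDisc) (hφb : ∀ z ∈ oDisc, ‖φ z‖ ≤ Cφ)
    (hg : MemH2 g) (hdec : ∀ z ∈ oDisc, f z = c + (z - ζ) * g z) (hc : c ≠ 0)
    (hφf : MemD ζ (fun z => φ z * f z)) :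
    MemD ζ φ ∧
      ENNReal.ofReal (‖c‖ ^ 2) * Dloc ζ φ ≤
        2 * (ENNReal.ofReal (Cφ ^ 2) * Dloc ζ f + Dloc ζ (fun z => φ z * f z)) := by
  have h0disc : (0:ℂ) ∈ oDisc := by simp [oDisc]
  have hCφ0 : 0 ≤ Cφ := le_trans (norm_nonneg _) (hφb 0 h0disc)
  have hc2 : (0:ℝ) < ‖c‖ ^ 2 := pow_pos (norm_pos_iff.mpr hc) 2
  obtain ⟨C, G, hG, hGdec⟩ := hφf
  have hfex : ∃ p : ℂ × (ℂ → ℂ), MemH2 p.2 ∧ ∀ z ∈ oDisc, f z = p.1 + (z - ζ) * p.2 z :=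
    ⟨(c, g), hg, hdec⟩
  have hFex : ∃ p : ℂ × (ℂ → ℂ), MemH2 p.2 ∧
      ∀ z ∈ oDisc, (fun z => φ z * f z) z = p.1 + (z - ζ) * p.2 z := ⟨(C, G), hG, hGdec⟩
  obtain ⟨hpf2, hpfdec⟩ := hfex.choose_spec
  obtain ⟨hpF2, hpFdec⟩ := hFex.choose_spec
  have hDf : Dloc ζ f = h2E hfex.choose.2 := by
    rw [Dloc, dif_pos hfex]
  have hDF : Dloc ζ (fun z => φ z * f z) = h2E hFex.choose.2 := by
    rw [Dloc, dif_pos hFex]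
  -- uniqueness for f : constant is c
  have hcf : hfex.choose.1 = c := (dec_unique ζ hζ hpf2 hg hpfdec hdec).1
  set gf := hfex.choose.2 with hgf
  set GF := hFex.choose.2 with hGF
  set CF := hFex.choose.1 with hCF
  -- decomposition of φ
  set g' : ℂ → ℂ := fun z => (GF z - φ z * gf z) / c with hg'
  have hφdec : ∀ z ∈ oDisc, φ z = CF / c + (z - ζ) * g' z := by
    intro z hz
    have e1 : f z = c + (z - ζ) * gf z := by rw [hpfdec z hz, hcf]
    have e2 : φ z * f z = CF + (z - ζ) * GF z := hpFdec z hz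
    rw [e1] at e2
    rw [show CF / c + (z - ζ) * g' z = (CF + (z - ζ) * (GF z - φ z * gf z)) / c by
      simp only [hg']; ring, eq_div_iff hc]
    linear_combination e2
  have hg'cont : ContinuousOn g' oDisc :=
    ((hpF2.1.continuousOn.sub (hφa.continuousOn.mul hpf2.1.continuousOn)).div_const c)
  have hg'diff : DifferentiableOn ℂ g' oDisc :=
    ((hpF2.1.sub (hφa.mul hpf2.1)).div_const c)
  have hg'pt : ∀ z ∈ oDisc, ‖g' z‖ ^ 2 ≤
      (2/‖c‖^2) * ‖GF z‖ ^ 2 + (2*Cφ^2/‖c‖^2) * ‖gf z‖ ^ 2 := by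
    intro z hz
    have h1 : ‖g' z‖ = ‖GF z - φ z * gf z‖ / ‖c‖ := by rw [hg']; simp [norm_div]
    have h2 : ‖GF z - φ z * gf z‖ ≤ ‖GF z‖ + ‖φ z‖ * ‖gf z‖ := by
      refine (norm_sub_le _ _).trans ?_
      rw [norm_mul]
    have h3 : ‖φ z‖ ≤ Cφ := hφb z hz
    have h4 := norm_nonneg (GF z)
    have h5 := norm_nonneg (gf z)
    have h6 := norm_nonneg (φ z)
    have h7 : 0 < ‖c‖ := norm_pos_iff.mpr hc
    rw [h1, div_pow]
    rw [div_le_iff₀ (by positivity)]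
    have h8 : ‖GF z - φ z * gf z‖ ^ 2 ≤ (‖GF z‖ + Cφ * ‖gf z‖)^2 := by
      apply pow_le_pow_left₀ (norm_nonneg _)
      refine h2.trans ?_
      exact add_le_add le_rfl (mul_le_mul_of_nonneg_right h3 h5)
    calc ‖GF z - φ z * gf z‖ ^ 2 ≤ (‖GF z‖ + Cφ * ‖gf z‖)^2 := h8
      _ ≤ 2 * ‖GF z‖^2 + 2 * Cφ^2 * ‖gf z‖^2 := by
          nlinarith [sq_nonneg (‖GF z‖ - Cφ * ‖gf z‖)]
      _ = ((2/‖c‖^2) * ‖GF z‖ ^ 2 + (2*Cφ^2/‖c‖^2) * ‖gf z‖ ^ 2) * ‖c‖ ^ 2 := by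
          have key : ∀ X Y : ℝ, (2/‖c‖^2 * X + 2*Cφ^2/‖c‖^2 * Y) * ‖c‖^2
              = 2*X + 2*Cφ^2*Y := by
            intro X Y
            have hca : ‖c‖ ≠ 0 := h7.ne'
            field_simp [hca]
          exact (key (‖GF z‖^2) (‖gf z‖^2)).symm
  have hbound : h2E g' ≤ ENNReal.ofReal (2/‖c‖^2) * h2E GF
      + ENNReal.ofReal (2*Cφ^2/‖c‖^2) * h2E gf :=
    h2E_le (by positivity) (by positivity) hg'cont hpF2.1.continuousOn hpf2.1.continuousOn hg'pt
  have hg'fin : h2E g' < ⊤ :=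
    hbound.trans_lt (ENNReal.add_lt_top.mpr
      ⟨ENNReal.mul_lt_top ENNReal.ofReal_lt_top hpF2.2,
        ENNReal.mul_lt_top ENNReal.ofReal_lt_top hpf2.2⟩)
  have hg'H2 : MemH2 g' := ⟨hg'diff, hg'fin⟩
  have hφex : ∃ p : ℂ × (ℂ → ℂ), MemH2 p.2 ∧ ∀ z ∈ oDisc, φ z = p.1 + (z - ζ) * p.2 z :=
    ⟨(CF / c, g'), hg'H2, hφdec⟩
  have hMemD : MemD ζ φ := ⟨CF / c, g', hg'H2, hφdec⟩
  obtain ⟨hpφ2, hpφdec⟩ := hφex.choose_spec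
  have hDφ : Dloc ζ φ = h2E g' := by
    rw [Dloc, dif_pos hφex]
    exact h2E_congr (dec_unique ζ hζ hpφ2 hg'H2 hpφdec hφdec).2
  refine ⟨hMemD, ?_⟩
  rw [hDφ, hDf, hDF]
  calc ENNReal.ofReal (‖c‖ ^ 2) * h2E g'
      ≤ ENNReal.ofReal (‖c‖ ^ 2) * (ENNReal.ofReal (2/‖c‖^2) * h2E GF
        + ENNReal.ofReal (2*Cφ^2/‖c‖^2) * h2E gf) := mul_le_mul_right hbound _
    _ = ENNReal.ofReal (‖c‖^2 * (2/‖c‖^2)) * h2E GF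
        + ENNReal.ofReal (‖c‖^2 * (2*Cφ^2/‖c‖^2)) * h2E gf := by
        rw [mul_add, ← mul_assoc, ← mul_assoc, ← ENNReal.ofReal_mul hc2.le,
          ← ENNReal.ofReal_mul hc2.le]
    _ = ENNReal.ofReal 2 * h2E GF + ENNReal.ofReal (2*Cφ^2) * h2E gf := by
        rw [show ‖c‖^2 * (2/‖c‖^2) = 2 from by
            rw [mul_comm]; exact div_mul_cancel₀ 2 hc2.ne',
          show ‖c‖^2 * (2*Cφ^2/‖c‖^2) = 2*Cφ^2 from by
            rw [mul_comm]; exact div_mul_cancel₀ (2*Cφ^2) hc2.ne']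
    _ = 2 * (ENNReal.ofReal (Cφ ^ 2) * h2E gf + h2E GF) := by
        rw [ENNReal.ofReal_mul (by norm_num : (0:ℝ) ≤ 2)]
        rw [show ENNReal.ofReal 2 = (2:ℝ≥0∞) from by norm_num]
        ring
end
end

section
/- Let {φ_j}_{j=1}^∞ ⊆ M(D(δ_1)) with sup_{z∈𝔻} Σ_j |φ_j(z)|² ≤ 1 and Σ_j ‖φ_j‖²_{D(δ_1)} ≤ 1. Then f := Σ_{i=1}^∞ [φ_i - φ_i(1)] · conj(φ_i(1)) converges in D(δ_1), belongs to M(D(δ_1)) = D(δ_1) ∩ H^∞(𝔻), satisfies f(1) = 0, and ‖f‖²_{D(δ_1)} ≤ 4. -/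
open Complex MeasureTheory Metric Set Filter
open scoped ENNReal Topology

noncomputable section

/-- circle mean -/
def mr (f : ℂ → ℂ) (r : ℝ) : ℝ :=
  (2 * Real.pi)⁻¹ * ∫ t in (0:ℝ)..(2 * Real.pi), ‖f (circleMap 0 r t)‖ ^ 2

lemma h2E_eq (f : ℂ → ℂ) : h2E f = ⨆ r : Set.Ioo (0:ℝ) 1, ENNReal.ofReal (mr f r.1) := by
  simp [h2E, mr, circleMap_zero]

lemma mr_nonneg (f : ℂ → ℂ) (r : ℝ) : 0 ≤ mr f r := by
  have h := intervalIntegral.integral_nonneg (μ := volume) (f := fun t => ‖f (circleMap 0 r t)‖ ^ 2)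
    (by positivity : (0:ℝ) ≤ 2 * Real.pi) (fun t _ => by positivity)
  have : (0:ℝ) ≤ (2 * Real.pi)⁻¹ := by positivity
  exact mul_nonneg this h

lemma ofReal_mr_le_h2E (f : ℂ → ℂ) {r : ℝ} (hr : r ∈ Set.Ioo (0:ℝ) 1) :
    ENNReal.ofReal (mr f r) ≤ h2E f := by
  rw [h2E_eq]; exact le_iSup (fun p : Set.Ioo (0:ℝ) 1 => ENNReal.ofReal (mr f p.1)) ⟨r, hr⟩

lemma h2E_le_s10 {f : ℂ → ℂ} {B : ℝ≥0∞} (h : ∀ r ∈ Set.Ioo (0:ℝ) 1, ENNReal.ofReal (mr f r) ≤ B) :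
    h2E f ≤ B := by
  rw [h2E_eq]; exact iSup_le fun p => h p.1 p.2

lemma mr_le_toReal {f : ℂ → ℂ} (hf : h2E f ≠ ⊤) {r : ℝ} (hr : r ∈ Set.Ioo (0:ℝ) 1) :
    mr f r ≤ (h2E f).toReal := by
  have := ofReal_mr_le_h2E f hr
  exact (ENNReal.ofReal_le_iff_le_toReal hf).mp this

lemma circleMap_mem_oDisc {r : ℝ} (hr : r ∈ Set.Ioo (0:ℝ) 1) (t : ℝ) :
    circleMap 0 r t ∈ oDisc := by
  simp only [oDisc, mem_ball, dist_zero_right]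
  have : ‖circleMap 0 r t‖ = |r| := norm_circleMap_zero r t
  rw [this, abs_of_pos hr.1]; exact hr.2

lemma cont_circle {f : ℂ → ℂ} (hf : ContinuousOn f oDisc) {r : ℝ} (hr : r ∈ Set.Ioo (0:ℝ) 1) :
    Continuous fun t => f (circleMap 0 r t) :=
  hf.comp_continuous (continuous_circleMap 0 r) (circleMap_mem_oDisc hr)

lemma memL2_of_continuous {u : ℝ → ℝ} (hu : Continuous u) :
    MemLp u (ENNReal.ofReal 2) (volume.restrict (Set.Ioc 0 (2 * Real.pi))) := by
  obtain ⟨C, hC⟩ := (isCompact_Icc (a := (0:ℝ)) (b := 2 * Real.pi)).exists_bound_of_continuousOn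
    hu.continuousOn
  refine MemLp.of_bound hu.aestronglyMeasurable C ?_
  filter_upwards [ae_restrict_mem measurableSet_Ioc] with x hx
  exact hC x (Set.Ioc_subset_Icc_self hx)


lemma kernel_pointwise {r : ℝ} (hr0 : 0 < r) {w : ℂ} (hw : ‖w‖ < r) (θ : ℝ) :
    deriv (circleMap 0 r) θ • ((circleMap 0 r θ - w)⁻¹ *
      ((r:ℂ)^2 - (starRingEnd ℂ) w * circleMap 0 r θ)⁻¹)
      = Complex.I * ((‖circleMap 0 r θ - w‖^2 : ℝ) : ℂ)⁻¹ := by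
  set z := circleMap 0 r θ with hz
  have hzr : ‖z‖ = r := by
    rw [hz, norm_circleMap_zero, abs_of_pos hr0]
  have hz0 : z ≠ 0 := by
    intro h; rw [h, norm_zero] at hzr; exact hr0.ne hzr
  have hzw : z - w ≠ 0 := by
    intro h; rw [sub_eq_zero] at h; rw [← h] at hw; exact lt_irrefl _ (hzr ▸ hw)
  have hkey : (r:ℂ)^2 - (starRingEnd ℂ) w * z = (starRingEnd ℂ) (z - w) * z := by
    have h1 : (starRingEnd ℂ) z * z = ((r:ℝ)^2 : ℝ) := by
      rw [mul_comm, Complex.mul_conj, Complex.normSq_eq_norm_sq, hzr]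
    rw [map_sub, sub_mul, h1]; push_cast; ring
  have hco : ((‖z - w‖^2 : ℝ) : ℂ) = (z - w) * (starRingEnd ℂ) (z - w) := by
    rw [Complex.mul_conj, Complex.normSq_eq_norm_sq]
  rw [deriv_circleMap, hkey, smul_eq_mul, hco, ← hz]
  have hcz : (starRingEnd ℂ) (z - w) ≠ 0 := star_ne_zero.mpr hzw
  set a := z - w
  set b := (starRingEnd ℂ) (z - w)
  field_simp

lemma kernel_integral {r : ℝ} (hr0 : 0 < r) (hr1 : r < 1) {w : ℂ} (hw : ‖w‖ < r) :
    ∫ θ in (0:ℝ)..(2 * Real.pi), (‖circleMap 0 r θ - w‖^2 : ℝ)⁻¹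
      = 2 * Real.pi / (r^2 - ‖w‖^2) := by
  have hwr : w ∈ ball (0:ℂ) r := by simpa [mem_ball, dist_zero_right] using hw
  -- Cauchy for h z = (r² - conj w * z)⁻¹
  have hdiff : DifferentiableOn ℂ (fun z => ((r:ℂ)^2 - (starRingEnd ℂ) w * z)⁻¹)
      (closedBall 0 r) := by
    intro z hz
    apply DifferentiableAt.differentiableWithinAt
    apply DifferentiableAt.inv (by fun_prop)
    intro h
    have h1 : ‖(starRingEnd ℂ) w * z‖ ≤ ‖w‖ * r := by
      rw [norm_mul, RCLike.norm_conj]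
      exact mul_le_mul_of_nonneg_left (by simpa [dist_zero_right] using hz) (norm_nonneg w)
    have h2 : ((r:ℂ)^2 : ℂ) = (starRingEnd ℂ) w * z := by linear_combination h
    have : ‖((r:ℂ)^2 : ℂ)‖ = r^2 := by
      rw [norm_pow, Complex.norm_real, Real.norm_of_nonneg hr0.le]
    nlinarith [norm_nonneg w, h2 ▸ this]
  have hdc : DiffContOnCl ℂ (fun z => ((r:ℂ)^2 - (starRingEnd ℂ) w * z)⁻¹) (ball 0 r) := by
    refine DifferentiableOn.diffContOnCl ?_
    rwa [closure_ball (0:ℂ) hr0.ne']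
  have hC := hdc.circleIntegral_sub_inv_smul hwr
  rw [circleIntegral] at hC
  have heq : ∀ θ ∈ Set.uIcc (0:ℝ) (2 * Real.pi),
      deriv (circleMap 0 r) θ • ((circleMap 0 r θ - w)⁻¹ •
        ((r:ℂ)^2 - (starRingEnd ℂ) w * circleMap 0 r θ)⁻¹)
      = Complex.I * ((‖circleMap 0 r θ - w‖^2 : ℝ) : ℂ)⁻¹ := by
    intro θ _
    simpa [smul_eq_mul, mul_assoc] using kernel_pointwise hr0 hw θ
  rw [intervalIntegral.integral_congr heq] at hC
  have hpull : ∫ θ in (0:ℝ)..(2 * Real.pi), Complex.I * ((‖circleMap 0 r θ - w‖^2 : ℝ) : ℂ)⁻¹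
      = Complex.I * ((∫ θ in (0:ℝ)..(2 * Real.pi), (‖circleMap 0 r θ - w‖^2 : ℝ)⁻¹ : ℝ) : ℂ) := by
    rw [intervalIntegral.integral_const_mul]
    congr 1
    rw [← intervalIntegral.integral_ofReal]
    apply intervalIntegral.integral_congr
    intro θ _; push_cast; ring
  rw [hpull] at hC
  -- RHS
  have hrhs : (2 * Real.pi * Complex.I : ℂ) • ((r:ℂ)^2 - (starRingEnd ℂ) w * w)⁻¹
      = Complex.I * ((2 * Real.pi / (r^2 - ‖w‖^2) : ℝ) : ℂ) := by
    have h1 : (starRingEnd ℂ) w * w = ((‖w‖^2 : ℝ) : ℂ) := by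
      rw [mul_comm, Complex.mul_conj, Complex.normSq_eq_norm_sq]
    rw [h1, smul_eq_mul]
    push_cast
    ring
  rw [hrhs] at hC
  have := mul_left_cancel₀ Complex.I_ne_zero hC
  exact_mod_cast this

lemma hardy_pointwise {g : ℂ → ℂ} (hg : DifferentiableOn ℂ g oDisc) {M : ℝ}
    (hM : ∀ r ∈ Set.Ioo (0:ℝ) 1, mr g r ≤ M) {w : ℂ} (hw : w ∈ oDisc) :
    ‖g w‖^2 * (1 - ‖w‖^2) ≤ M := by
  have hw1 : ‖w‖ < 1 := by simpa [oDisc, mem_ball, dist_zero_right] using hw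
  have hM0 : 0 ≤ M := le_trans (mr_nonneg g (1/2)) (hM (1/2) (by norm_num))
  have pi_pos := Real.pi_pos
  have claim : ∀ r ∈ Set.Ioo ‖w‖ 1, ‖g w‖^2 * (r^2 - ‖w‖^2) ≤ M * r^2 := by
    rintro r ⟨hwr, hr1⟩
    have hr0 : 0 < r := lt_of_le_of_lt (norm_nonneg w) hwr
    have hrIoo : r ∈ Set.Ioo (0:ℝ) 1 := ⟨hr0, hr1⟩
    have hwball : w ∈ ball (0:ℂ) r := by simpa [mem_ball, dist_zero_right] using hwr
    have hsub : closedBall (0:ℂ) r ⊆ oDisc := closedBall_subset_ball hr1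
    have hdc : DiffContOnCl ℂ g (ball 0 r) := by
      refine DifferentiableOn.diffContOnCl ?_
      rw [closure_ball (0:ℂ) hr0.ne']
      exact hg.mono hsub
    have hC := hdc.circleIntegral_sub_inv_smul hwball
    set D : ℝ := r^2 - ‖w‖^2 with hD
    have hD0 : 0 < D := by nlinarith [norm_nonneg w]
    -- norm bound for the circle integral
    have hnormC : 2 * Real.pi * ‖g w‖ = ‖∮ z in C(0, r), (z - w)⁻¹ • g z‖ := by
      have hI : ‖(2 * (Real.pi:ℂ) * Complex.I : ℂ)‖ = 2 * Real.pi := by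
        simp [norm_mul, Complex.norm_real, Real.norm_eq_abs, abs_of_pos pi_pos]
      rw [hC, norm_smul, hI]
    have hint : ‖∮ z in C(0, r), (z - w)⁻¹ • g z‖
        ≤ ∫ θ in (0:ℝ)..(2*Real.pi), r * (‖g (circleMap 0 r θ)‖ * ‖circleMap 0 r θ - w‖⁻¹) := by
      rw [circleIntegral]
      refine le_trans (intervalIntegral.norm_integral_le_integral_norm (by positivity)) ?_
      apply le_of_eq
      apply intervalIntegral.integral_congr
      intro θ _
      dsimp only
      rw [deriv_circleMap, norm_smul, norm_smul]
      have h1 : ‖circleMap 0 r θ * Complex.I‖ = r := by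
        rw [norm_mul, norm_circleMap_zero, abs_of_pos hr0]
        simp
      rw [h1, norm_inv]
      ring
    -- Hölder
    set u : ℝ → ℝ := fun θ => ‖g (circleMap 0 r θ)‖ with hu
    set v : ℝ → ℝ := fun θ => ‖circleMap 0 r θ - w‖⁻¹ with hv
    have hucont : Continuous u := (cont_circle hg.continuousOn hrIoo).norm
    have hcz : ∀ θ, circleMap 0 r θ - w ≠ 0 := by
      intro θ h
      have : ‖circleMap 0 r θ‖ = r := by
        rw [norm_circleMap_zero, abs_of_pos hr0]
      rw [sub_eq_zero] at h
      rw [h] at this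
      exact (ne_of_lt hwr) this
    have hvcont : Continuous v := by
      apply Continuous.inv₀ ((continuous_circleMap 0 r).sub continuous_const).norm
      intro θ
      exact norm_ne_zero_iff.mpr (hcz θ)
    have hconj : Real.HolderConjugate 2 2 := Real.HolderConjugate.two_two
    have holder := integral_mul_le_Lp_mul_Lq_of_nonneg (μ := volume.restrict (Set.Ioc 0 (2*Real.pi)))
      hconj (f := u) (g := v)
      (Eventually.of_forall fun θ => norm_nonneg _)
      (Eventually.of_forall fun θ => inv_nonneg.mpr (norm_nonneg _))
      (memL2_of_continuous hucont) (memL2_of_continuous hvcont)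
    -- translate interval integrals
    have h2pi : (0:ℝ) ≤ 2 * Real.pi := by positivity
    have hIoc : ∀ F : ℝ → ℝ, (∫ θ in (0:ℝ)..(2*Real.pi), F θ)
        = ∫ θ in Set.Ioc (0:ℝ) (2*Real.pi), F θ := by
      intro F; rw [intervalIntegral.integral_of_le h2pi]
    have hu2 : ∫ θ in Set.Ioc (0:ℝ) (2*Real.pi), u θ ^ (2:ℝ) ≤ 2 * Real.pi * M := by
      have : ∀ θ, u θ ^ (2:ℝ) = ‖g (circleMap 0 r θ)‖ ^ (2:ℕ) := by
        intro θ; rw [← Real.rpow_natCast (u θ) 2]; norm_num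
      rw [integral_congr_ae (Eventually.of_forall fun θ => this θ), ← hIoc]
      have h3 := hM r hrIoo
      rw [mr] at h3
      have h4 := (inv_mul_le_iff₀ (by positivity : (0:ℝ) < 2 * Real.pi)).mp h3
      linarith
    have hv2 : ∫ θ in Set.Ioc (0:ℝ) (2*Real.pi), v θ ^ (2:ℝ) = 2 * Real.pi / D := by
      have : ∀ θ, v θ ^ (2:ℝ) = (‖circleMap 0 r θ - w‖^2 : ℝ)⁻¹ := by
        intro θ
        rw [show ((2:ℝ)) = ((2:ℕ):ℝ) by norm_num, Real.rpow_natCast]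
        simp [hv, inv_pow]
      rw [integral_congr_ae (Eventually.of_forall fun θ => this θ), ← hIoc]
      exact kernel_integral hr0 hr1 hwr
    -- combine
    have huv_int : ∫ θ in (0:ℝ)..(2*Real.pi), r * (u θ * v θ)
        = r * ∫ θ in Set.Ioc (0:ℝ) (2*Real.pi), u θ * v θ := by
      rw [intervalIntegral.integral_const_mul, hIoc]
    have hbound : 2 * Real.pi * ‖g w‖
        ≤ r * ((2 * Real.pi * M) ^ ((1:ℝ)/2) * (2 * Real.pi / D) ^ ((1:ℝ)/2)) := by
      rw [hnormC]
      refine le_trans hint ?_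
      rw [huv_int]
      have h1 : (∫ θ in Set.Ioc (0:ℝ) (2*Real.pi), u θ * v θ)
          ≤ (2 * Real.pi * M) ^ ((1:ℝ)/2) * (2 * Real.pi / D) ^ ((1:ℝ)/2) := by
        refine le_trans holder ?_
        rw [hv2]
        have base_nonneg : (0:ℝ) ≤ ∫ θ in Set.Ioc (0:ℝ) (2*Real.pi), u θ ^ (2:ℝ) := by
          apply integral_nonneg; intro θ
          exact Real.rpow_nonneg (norm_nonneg _) 2
        have h5 := Real.rpow_le_rpow base_nonneg hu2 (by norm_num : (0:ℝ) ≤ 1/2)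
        exact mul_le_mul_of_nonneg_right h5 (Real.rpow_nonneg (by positivity) _)
      exact mul_le_mul_of_nonneg_left h1 hr0.le
    -- now square and conclude
    have hsq : ‖g w‖ ≤ r * Real.sqrt (M / D) := by
      have e1 : (2 * Real.pi * M) ^ ((1:ℝ)/2) = Real.sqrt (2 * Real.pi * M) := by
        rw [Real.sqrt_eq_rpow]
      have e2 : (2 * Real.pi / D) ^ ((1:ℝ)/2) = Real.sqrt (2 * Real.pi / D) := by
        rw [Real.sqrt_eq_rpow]
      rw [e1, e2, ← Real.sqrt_mul (by positivity)] at hbound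
      have e3 : 2 * Real.pi * M * (2 * Real.pi / D) = (2*Real.pi)^2 * (M / D) := by
        field_simp
      rw [e3, Real.sqrt_mul (by positivity), Real.sqrt_sq (by positivity)] at hbound
      nlinarith [hbound, pi_pos]
    have hgw2 : ‖g w‖^2 ≤ r^2 * (M / D) := by
      have := mul_self_le_mul_self (norm_nonneg (g w)) hsq
      have hs : Real.sqrt (M / D) ^ 2 = M / D := Real.sq_sqrt (by positivity)
      nlinarith [Real.sqrt_nonneg (M / D)]
    have : ‖g w‖^2 * D ≤ r^2 * M := by
      have := mul_le_mul_of_nonneg_right hgw2 hD0.le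
      calc ‖g w‖^2 * D ≤ r^2 * (M / D) * D := this
        _ = r^2 * M := by field_simp
    nlinarith [this]
  -- limit r → 1⁻
  have hne : (𝓝[<] (1:ℝ)).NeBot := nhdsLT_neBot 1
  have hev : ∀ᶠ r in 𝓝[<] (1:ℝ), ‖g w‖^2 * (r^2 - ‖w‖^2) ≤ M * r^2 := by
    filter_upwards [Ioo_mem_nhdsLT hw1] with r hr using claim r hr
  have h1 : Tendsto (fun r : ℝ => ‖g w‖^2 * (r^2 - ‖w‖^2)) (𝓝[<] (1:ℝ))
      (𝓝 (‖g w‖^2 * (1 - ‖w‖^2))) := by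
    apply Tendsto.mono_left ?_ nhdsWithin_le_nhds
    have : Continuous fun r : ℝ => ‖g w‖^2 * (r^2 - ‖w‖^2) :=
      continuous_const.mul ((continuous_pow 2).sub continuous_const)
    simpa using this.tendsto 1
  have h2 : Tendsto (fun r : ℝ => M * r^2) (𝓝[<] (1:ℝ)) (𝓝 M) := by
    apply Tendsto.mono_left ?_ nhdsWithin_le_nhds
    have : Continuous fun r : ℝ => M * r^2 := continuous_const.mul (continuous_pow 2)
    simpa using this.tendsto 1
  exact le_of_tendsto_of_tendsto h1 h2 hev


lemma summable_mul_of_sq {a b : ℕ → ℝ} (ha : ∀ i, 0 ≤ a i) (hb : ∀ i, 0 ≤ b i)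
    (ha2 : Summable (fun i => a i ^ 2)) (hb2 : Summable (fun i => b i ^ 2)) :
    Summable (fun i => a i * b i) := by
  apply Summable.of_nonneg_of_le (fun i => mul_nonneg (ha i) (hb i))
    (fun i => ?_) ((ha2.add hb2).mul_left (1/2 : ℝ))
  have := sq_nonneg (a i - b i)
  nlinarith

lemma tsum_mul_le_sqrt {a b : ℕ → ℝ} (ha : ∀ i, 0 ≤ a i) (hb : ∀ i, 0 ≤ b i)
    (ha2 : Summable (fun i => a i ^ 2)) (hb2 : Summable (fun i => b i ^ 2)) :
    (∑' i, a i * b i) ≤ Real.sqrt (∑' i, a i ^ 2) * Real.sqrt (∑' i, b i ^ 2) := by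
  apply Summable.tsum_le_of_sum_le (summable_mul_of_sq ha hb ha2 hb2)
  intro F
  have h1 := Finset.sum_mul_sq_le_sq_mul_sq F a b
  have h2 : (∑ i ∈ F, a i ^ 2) ≤ ∑' i, a i ^ 2 := Summable.sum_le_tsum F (fun i _ => sq_nonneg _) ha2
  have h3 : (∑ i ∈ F, b i ^ 2) ≤ ∑' i, b i ^ 2 := Summable.sum_le_tsum F (fun i _ => sq_nonneg _) hb2
  have hF : 0 ≤ ∑ i ∈ F, a i * b i := Finset.sum_nonneg fun i _ => mul_nonneg (ha i) (hb i)
  have h4 : (∑ i ∈ F, a i * b i) ^ 2 ≤ (∑' i, a i ^ 2) * (∑' i, b i ^ 2) :=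
    le_trans h1 (mul_le_mul h2 h3 (Finset.sum_nonneg fun i _ => sq_nonneg _)
      (tsum_nonneg fun i => sq_nonneg _))
  calc (∑ i ∈ F, a i * b i) = Real.sqrt ((∑ i ∈ F, a i * b i) ^ 2) := (Real.sqrt_sq hF).symm
    _ ≤ Real.sqrt ((∑' i, a i ^ 2) * (∑' i, b i ^ 2)) := Real.sqrt_le_sqrt h4
    _ = Real.sqrt (∑' i, a i ^ 2) * Real.sqrt (∑' i, b i ^ 2) :=
        Real.sqrt_mul (tsum_nonneg fun i => sq_nonneg _) _

lemma ofReal_mr_eq {f : ℂ → ℂ} (hf : ContinuousOn f oDisc) {r : ℝ} (hr : r ∈ Set.Ioo (0:ℝ) 1) :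
    ENNReal.ofReal (mr f r) = ENNReal.ofReal ((2 * Real.pi)⁻¹)
      * ∫⁻ θ in Set.Ioc (0:ℝ) (2 * Real.pi), ENNReal.ofReal (‖f (circleMap 0 r θ)‖^2) := by
  have hcont : Continuous fun θ => ‖f (circleMap 0 r θ)‖^2 := ((cont_circle hf hr).norm).pow 2
  have hint : IntegrableOn (fun θ => ‖f (circleMap 0 r θ)‖^2) (Set.Ioc 0 (2 * Real.pi)) volume :=
    hcont.integrableOn_Ioc
  have h2pi : (0:ℝ) ≤ 2 * Real.pi := by positivity
  rw [mr, ENNReal.ofReal_mul (by positivity), intervalIntegral.integral_of_le h2pi]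
  congr 1
  exact ofReal_integral_eq_lintegral_ofReal hint (Eventually.of_forall fun θ => by positivity)

lemma mean_bound {v : ℕ → ℂ → ℂ} {F : ℂ → ℂ} (hvc : ∀ i, ContinuousOn (v i) oDisc)
    (hFc : ContinuousOn F oDisc) {C' : ℝ≥0∞} (hC' : C' ≠ ⊤)
    (hpt : ∀ z ∈ oDisc, ENNReal.ofReal (‖F z‖^2) ≤ C' * ∑' i, ENNReal.ofReal (‖v i z‖^2))
    {r : ℝ} (hr : r ∈ Set.Ioo (0:ℝ) 1) :
    ENNReal.ofReal (mr F r) ≤ C' * ∑' i, h2E (v i) := by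
  rw [ofReal_mr_eq hFc hr]
  have step1 : ∫⁻ θ in Set.Ioc (0:ℝ) (2 * Real.pi), ENNReal.ofReal (‖F (circleMap 0 r θ)‖^2)
      ≤ C' * ∑' i, ∫⁻ θ in Set.Ioc (0:ℝ) (2 * Real.pi),
          ENNReal.ofReal (‖v i (circleMap 0 r θ)‖^2) := by
    calc ∫⁻ θ in Set.Ioc (0:ℝ) (2 * Real.pi), ENNReal.ofReal (‖F (circleMap 0 r θ)‖^2)
        ≤ ∫⁻ θ in Set.Ioc (0:ℝ) (2 * Real.pi),
            C' * ∑' i, ENNReal.ofReal (‖v i (circleMap 0 r θ)‖^2) :=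
          lintegral_mono fun θ => hpt _ (circleMap_mem_oDisc hr θ)
      _ = C' * ∫⁻ θ in Set.Ioc (0:ℝ) (2 * Real.pi),
            ∑' i, ENNReal.ofReal (‖v i (circleMap 0 r θ)‖^2) := lintegral_const_mul' _ _ hC'
      _ = C' * ∑' i, ∫⁻ θ in Set.Ioc (0:ℝ) (2 * Real.pi),
            ENNReal.ofReal (‖v i (circleMap 0 r θ)‖^2) := by
          congr 1
          exact lintegral_tsum fun i =>
            ((((cont_circle (hvc i) hr).norm.pow 2).measurable).ennreal_ofReal).aemeasurable
  calc ENNReal.ofReal ((2 * Real.pi)⁻¹) * ∫⁻ θ in Set.Ioc (0:ℝ) (2 * Real.pi),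
          ENNReal.ofReal (‖F (circleMap 0 r θ)‖^2)
      ≤ ENNReal.ofReal ((2 * Real.pi)⁻¹) * (C' * ∑' i, ∫⁻ θ in Set.Ioc (0:ℝ) (2 * Real.pi),
          ENNReal.ofReal (‖v i (circleMap 0 r θ)‖^2)) := mul_le_mul_right step1 _
    _ = C' * (ENNReal.ofReal ((2 * Real.pi)⁻¹) * ∑' i, ∫⁻ θ in Set.Ioc (0:ℝ) (2 * Real.pi),
          ENNReal.ofReal (‖v i (circleMap 0 r θ)‖^2)) := by ring
    _ = C' * ∑' i, ENNReal.ofReal (mr (v i) r) := by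
        congr 1
        rw [← ENNReal.tsum_mul_left]
        exact tsum_congr fun i => (ofReal_mr_eq (hvc i) hr).symm
    _ ≤ C' * ∑' i, h2E (v i) := by
        apply mul_le_mul_right
        exact ENNReal.tsum_le_tsum fun i => ofReal_mr_le_h2E (v i) hr

lemma tsum_diffOn {h : ℕ → ℂ → ℂ} (hd : ∀ i, DifferentiableOn ℂ (h i) oDisc)
    (hb : ∀ ρ, ρ ∈ Set.Ioo (0:ℝ) 1 → ∃ u : ℕ → ℝ, Summable u ∧
      ∀ i, ∀ z ∈ closedBall (0:ℂ) ρ, ‖h i z‖ ≤ u i) :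
    DifferentiableOn ℂ (fun z => ∑' i, h i z) oDisc ∧
      ContinuousOn (fun z => ∑' i, h i z) oDisc := by
  have key : ∀ ρ ∈ Set.Ioo (0:ℝ) 1, DifferentiableOn ℂ (fun z => ∑' i, h i z) (ball 0 ρ) ∧
      ContinuousOn (fun z => ∑' i, h i z) (ball 0 ρ) := by
    intro ρ hρ
    obtain ⟨u, hu, hbd⟩ := hb ρ hρ
    have hsub : closedBall (0:ℂ) ρ ⊆ oDisc := closedBall_subset_ball hρ.2
    have hT := tendstoUniformlyOn_tsum hu (fun i z hz => hbd i z hz)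
    have hdiffsum : ∀ t : Finset ℕ, DifferentiableOn ℂ (fun z => ∑ i ∈ t, h i z) oDisc := by
      intro t
      exact DifferentiableOn.fun_sum fun i _ => hd i
    constructor
    · apply (hT.tendstoLocallyUniformlyOn.mono ball_subset_closedBall).differentiableOn
        (Eventually.of_forall fun t => (hdiffsum t).mono
          ((ball_subset_closedBall).trans hsub)) isOpen_ball
    · have hcont := hT.continuousOn
        (Eventually.of_forall fun t => ((hdiffsum t).continuousOn.mono hsub)).frequently
      exact hcont.mono ball_subset_closedBall
  have hball : ∀ z ∈ oDisc, ∃ ρ, ρ ∈ Set.Ioo (0:ℝ) 1 ∧ z ∈ ball (0:ℂ) ρ := by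
    intro z hz
    have hz1 : ‖z‖ < 1 := by simpa [oDisc, mem_ball, dist_zero_right] using hz
    refine ⟨(‖z‖ + 1)/2, ⟨by positivity, by linarith⟩, ?_⟩
    simp only [mem_ball, dist_zero_right]
    linarith
  constructor
  · intro z hz
    obtain ⟨ρ, hρ, hzρ⟩ := hball z hz
    exact (((key ρ hρ).1.differentiableAt (isOpen_ball.mem_nhds hzρ))).differentiableWithinAt
  · intro z hz
    obtain ⟨ρ, hρ, hzρ⟩ := hball z hz
    exact (((key ρ hρ).2.continuousAt (isOpen_ball.mem_nhds hzρ))).continuousWithinAt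

/-- Under `Σ‖φ_j‖²_{D(δ_1)} ≤ 1` and `sup_𝔻 Σ|φ_j(z)|² ≤ 1`, the function
`f = Σ_i (φ_i - φ_i(1)) conj(φ_i(1))` converges, is analytic and bounded on `𝔻`,
lies in `D(δ_1)` with `f(1) = 0`, and `‖f‖²_{D(δ_1)} ≤ 4`. -/
theorem stmt10 (φ g : ℕ → ℂ → ℂ) (c : ℕ → ℂ)
    (hH2 : ∀ j, MemH2 (g j))
    (hdec : ∀ j, ∀ z ∈ oDisc, φ j z = c j + (z - 1) * g j z)
    (hsum : (∑' j, (h2E (φ j) + h2E (g j))) ≤ 1)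
    (hup : ∀ z ∈ oDisc, (∑' j, ENNReal.ofReal (‖φ j z‖ ^ 2)) ≤ 1) :
    (∀ z ∈ oDisc, Summable fun i => (φ i z - c i) * (starRingEnd ℂ) (c i)) ∧
    DifferentiableOn ℂ (fun z => ∑' i, (φ i z - c i) * (starRingEnd ℂ) (c i)) oDisc ∧
    (∀ z ∈ oDisc, ‖∑' i, (φ i z - c i) * (starRingEnd ℂ) (c i)‖ ≤ 2) ∧
    ∃ G : ℂ → ℂ, MemH2 G ∧
      (∀ z ∈ oDisc, (∑' i, (φ i z - c i) * (starRingEnd ℂ) (c i)) = (z - 1) * G z) ∧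
      h2E (fun z => ∑' i, (φ i z - c i) * (starRingEnd ℂ) (c i)) + h2E G ≤ 4 := by
  -- ## basic consequences of hsum
  have hsum_split : (∑' j, h2E (φ j)) + (∑' j, h2E (g j)) ≤ 1 := by
    rw [← ENNReal.tsum_add]; exact hsum
  have hSφ_le : (∑' j, h2E (φ j)) ≤ 1 := le_trans le_self_add hsum_split
  have hSg_le : (∑' j, h2E (g j)) ≤ 1 := le_trans le_add_self hsum_split
  have hφ_le1 : ∀ j, h2E (φ j) ≤ 1 := fun j => le_trans (ENNReal.le_tsum j) hSφ_le
  have hg_le1 : ∀ j, h2E (g j) ≤ 1 := fun j => le_trans (ENNReal.le_tsum j) hSg_le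
  have hφ_ne : ∀ j, h2E (φ j) ≠ ⊤ := fun j => ne_top_of_le_ne_top ENNReal.one_ne_top (hφ_le1 j)
  have hg_ne : ∀ j, h2E (g j) ≠ ⊤ := fun j => ne_top_of_le_ne_top ENNReal.one_ne_top (hg_le1 j)
  set Mg : ℕ → ℝ := fun j => (h2E (g j)).toReal with hMg_def
  have hMg0 : ∀ j, 0 ≤ Mg j := fun j => ENNReal.toReal_nonneg
  have hMg_summ : Summable Mg :=
    ENNReal.summable_toReal (ne_top_of_le_ne_top ENNReal.one_ne_top hSg_le)
  -- differentiability / continuity of the data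
  have hgdiff : ∀ j, DifferentiableOn ℂ (g j) oDisc := fun j => (hH2 j).1
  have hgcont : ∀ j, ContinuousOn (g j) oDisc := fun j => (hgdiff j).continuousOn
  have hφdiff : ∀ j, DifferentiableOn ℂ (φ j) oDisc := by
    intro j
    have h1 : DifferentiableOn ℂ (fun z => c j + (z - 1) * g j z) oDisc :=
      (differentiableOn_const _).add
        (((differentiableOn_id).sub (differentiableOn_const _)).mul (hgdiff j))
    exact DifferentiableOn.congr h1 (fun z hz => hdec j z hz)
  have hφcont : ∀ j, ContinuousOn (φ j) oDisc := fun j => (hφdiff j).continuousOn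
  -- pointwise Hardy bound for g j
  have hgpt : ∀ j, ∀ z ∈ oDisc, ‖g j z‖^2 * (1 - ‖z‖^2) ≤ Mg j := by
    intro j z hz
    exact hardy_pointwise (hgdiff j) (fun r hr => mr_le_toReal (hg_ne j) hr) hz
  have hoD : ∀ z : ℂ, z ∈ oDisc ↔ ‖z‖ < 1 := by
    intro z; simp [oDisc, mem_ball, dist_zero_right]
  have hgsq_bd : ∀ z ∈ oDisc, ∀ j, ‖g j z‖^2 ≤ Mg j * (1 - ‖z‖^2)⁻¹ := by
    intro z hz j
    have h1 : 0 < 1 - ‖z‖^2 := by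
      have := (hoD z).mp hz; nlinarith [norm_nonneg z]
    have h2 := hgpt j z hz
    have h3 : ‖g j z‖^2 = ‖g j z‖^2 * (1 - ‖z‖^2) * (1 - ‖z‖^2)⁻¹ := by
      rw [mul_inv_cancel_right₀ h1.ne']
    rw [h3]
    exact mul_le_mul_of_nonneg_right h2 (by positivity)
  have hgsq_summ : ∀ z ∈ oDisc, Summable (fun j => ‖g j z‖^2) := by
    intro z hz
    apply Summable.of_nonneg_of_le (fun j => sq_nonneg _) (fun j => hgsq_bd z hz j)
      (hMg_summ.mul_right _)
  -- ## radial limits and the bound ∑ ‖c i‖² ≤ 1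
  have hro : ∀ r : ℝ, r ∈ Set.Ioo (0:ℝ) 1 → ((r:ℂ) ∈ oDisc) := by
    intro r hr
    rw [hoD, Complex.norm_real, Real.norm_eq_abs, abs_of_pos hr.1]
    exact hr.2
  have hradial : ∀ j, Tendsto (fun r : ℝ => φ j (r:ℂ)) (𝓝[<] (1:ℝ)) (𝓝 (c j)) := by
    intro j
    have h0 : Tendsto (fun r : ℝ => ((r:ℂ) - 1) * g j (r:ℂ)) (𝓝[<] (1:ℝ)) (𝓝 0) := by
      rw [tendsto_zero_iff_norm_tendsto_zero]
      apply squeeze_zero' (Eventually.of_forall fun r => norm_nonneg _)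
        (g := fun r => Real.sqrt (Mg j * (1 - r)))
      · filter_upwards [Ioo_mem_nhdsLT (by norm_num : (0:ℝ) < 1)] with r hr
        have hrd := hro r hr
        have h1 : ‖((r:ℂ) - 1)‖ = 1 - r := by
          rw [show ((r:ℂ) - 1) = ((r - 1 : ℝ) : ℂ) by push_cast; ring, Complex.norm_real,
            Real.norm_eq_abs, abs_of_neg (by linarith [hr.2])]
          ring
        have h2 : ‖(r:ℂ)‖ = r := by
          rw [Complex.norm_real, Real.norm_eq_abs, abs_of_pos hr.1]
        have h3 := hgpt j (r:ℂ) hrd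
        rw [h2] at h3
        rw [norm_mul, h1]
        have h4 : ((1 - r) * ‖g j (r:ℂ)‖)^2 ≤ Mg j * (1 - r) := by
          nlinarith [norm_nonneg (g j (r:ℂ)), hr.1, hr.2, hMg0 j]
        have h5 : 0 ≤ (1 - r) * ‖g j (r:ℂ)‖ :=
          mul_nonneg (by linarith [hr.2]) (norm_nonneg _)
        calc (1 - r) * ‖g j (r:ℂ)‖
            = Real.sqrt (((1 - r) * ‖g j (r:ℂ)‖)^2) := (Real.sqrt_sq h5).symm
          _ ≤ Real.sqrt (Mg j * (1 - r)) := Real.sqrt_le_sqrt h4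
      · have hc : Tendsto (fun r : ℝ => Real.sqrt (Mg j * (1 - r))) (𝓝 (1:ℝ))
            (𝓝 (Real.sqrt (Mg j * (1 - 1)))) := by
          apply (Real.continuous_sqrt.comp
            (continuous_const.mul (continuous_const.sub continuous_id))).tendsto
        have : Real.sqrt (Mg j * (1 - 1)) = 0 := by simp
        rw [this] at hc
        exact hc.mono_left nhdsWithin_le_nhds
    have h1 : Tendsto (fun r : ℝ => c j + ((r:ℂ) - 1) * g j (r:ℂ)) (𝓝[<] (1:ℝ)) (𝓝 (c j)) := by
      have := tendsto_const_nhds (x := c j) (f := 𝓝[<] (1:ℝ)).add h0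
      simpa using this
    apply h1.congr'
    filter_upwards [Ioo_mem_nhdsLT (by norm_num : (0:ℝ) < 1)] with r hr
    exact (hdec j (r:ℂ) (hro r hr)).symm
  -- finite sums of ‖φ i z‖² are ≤ 1 on the disc
  have hsumF : ∀ z ∈ oDisc, ∀ F : Finset ℕ, (∑ i ∈ F, ‖φ i z‖^2) ≤ 1 := by
    intro z hz F
    have h1 : (∑ i ∈ F, ENNReal.ofReal (‖φ i z‖^2)) ≤ 1 :=
      le_trans (ENNReal.sum_le_tsum F) (hup z hz)
    have h2 : ENNReal.ofReal (∑ i ∈ F, ‖φ i z‖^2) = ∑ i ∈ F, ENNReal.ofReal (‖φ i z‖^2) :=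
      ENNReal.ofReal_sum_of_nonneg (fun i _ => sq_nonneg _)
    rw [← h2] at h1
    exact ENNReal.ofReal_le_one.mp h1
  have hFinBound : ∀ F : Finset ℕ, (∑ i ∈ F, ‖c i‖^2) ≤ 1 := by
    intro F
    have hT : Tendsto (fun r : ℝ => ∑ i ∈ F, ‖φ i (r:ℂ)‖^2) (𝓝[<] (1:ℝ))
        (𝓝 (∑ i ∈ F, ‖c i‖^2)) := by
      apply tendsto_finset_sum
      intro i _
      exact ((hradial i).norm).pow 2
    apply le_of_tendsto hT
    filter_upwards [Ioo_mem_nhdsLT (by norm_num : (0:ℝ) < 1)] with r hr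
    exact hsumF (r:ℂ) (hro r hr) F
  have hc2_summ : Summable (fun i => ‖c i‖^2) :=
    summable_of_sum_le (fun i => sq_nonneg _) hFinBound
  set c2 : ℝ := ∑' i, ‖c i‖^2 with hc2_def
  have hc2_nonneg : 0 ≤ c2 := tsum_nonneg fun i => sq_nonneg _
  have hc2_le1 : c2 ≤ 1 := Summable.tsum_le_of_sum_le hc2_summ hFinBound

  -- ## pointwise square-summability of φ
  have hφsq_summ : ∀ z ∈ oDisc, Summable (fun i => ‖φ i z‖^2) := by
    intro z hz
    have h1 := ne_top_of_le_ne_top ENNReal.one_ne_top (hup z hz)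
    have h2 := ENNReal.summable_toReal h1
    apply h2.congr
    intro i
    exact ENNReal.toReal_ofReal (sq_nonneg _)
  have hφsq_le1 : ∀ z ∈ oDisc, (∑' i, ‖φ i z‖^2) ≤ 1 := fun z hz =>
    Summable.tsum_le_of_sum_le (hφsq_summ z hz) (fun F => hsumF z hz F)
  -- ## summability of the complex series
  have hSg_mul : ∀ z ∈ oDisc, Summable (fun i => ‖g i z‖ * ‖c i‖) := by
    intro z hz
    apply summable_mul_of_sq (fun i => norm_nonneg _) (fun i => norm_nonneg _)
      (hgsq_summ z hz) hc2_summ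
  have hSφ_mul : ∀ z ∈ oDisc, Summable (fun i => ‖φ i z‖ * ‖c i‖) := by
    intro z hz
    apply summable_mul_of_sq (fun i => norm_nonneg _) (fun i => norm_nonneg _)
      (hφsq_summ z hz) hc2_summ
  have hSA : ∀ z ∈ oDisc, Summable (fun i => φ i z * (starRingEnd ℂ) (c i)) := by
    intro z hz
    apply Summable.of_norm
    apply (hSφ_mul z hz).congr
    intro i
    rw [norm_mul, RCLike.norm_conj]
  have hSc : Summable (fun i => c i * (starRingEnd ℂ) (c i)) := by
    have h1 : ∀ i, c i * (starRingEnd ℂ) (c i) = ((‖c i‖^2 : ℝ) : ℂ) := by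
      intro i
      rw [Complex.mul_conj, Complex.normSq_eq_norm_sq]
    apply Summable.congr _ (fun i => (h1 i).symm)
    exact (Complex.summable_ofReal).mpr hc2_summ
  have hScsum : (∑' i, c i * (starRingEnd ℂ) (c i)) = ((c2 : ℝ) : ℂ) := by
    have h1 : ∀ i, c i * (starRingEnd ℂ) (c i) = ((‖c i‖^2 : ℝ) : ℂ) := by
      intro i
      rw [Complex.mul_conj, Complex.normSq_eq_norm_sq]
    rw [tsum_congr h1, ← Complex.ofReal_tsum]
  have hgc_norm : ∀ z ∈ oDisc, ∀ i, ‖g i z * (starRingEnd ℂ) (c i)‖ = ‖g i z‖ * ‖c i‖ := by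
    intro z hz i; rw [norm_mul, RCLike.norm_conj]
  have hSG : ∀ z ∈ oDisc, Summable (fun i => g i z * (starRingEnd ℂ) (c i)) := by
    intro z hz
    apply Summable.of_norm
    exact (hSg_mul z hz).congr (fun i => (hgc_norm z hz i).symm)
  have hSf : ∀ z ∈ oDisc, Summable (fun i => (φ i z - c i) * (starRingEnd ℂ) (c i)) := by
    intro z hz
    apply Summable.of_norm
    apply Summable.of_nonneg_of_le (fun i => norm_nonneg _) (fun i => ?_)
      ((hSg_mul z hz).mul_left 2)
    rw [norm_mul, RCLike.norm_conj, hdec i z hz]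
    have h1 : ‖c i + (z - 1) * g i z - c i‖ = ‖z - 1‖ * ‖g i z‖ := by
      rw [show c i + (z - 1) * g i z - c i = (z - 1) * g i z by ring, norm_mul]
    rw [h1]
    have h2 : ‖z - 1‖ ≤ 2 := by
      have := (hoD z).mp hz
      calc ‖z - 1‖ ≤ ‖z‖ + ‖(1:ℂ)‖ := norm_sub_le _ _
        _ ≤ 2 := by rw [norm_one]; linarith
    calc ‖z - 1‖ * ‖g i z‖ * ‖c i‖ ≤ 2 * ‖g i z‖ * ‖c i‖ := by
          apply mul_le_mul_of_nonneg_right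
            (mul_le_mul_of_nonneg_right h2 (norm_nonneg _)) (norm_nonneg _)
      _ = 2 * (‖g i z‖ * ‖c i‖) := by ring
  -- ## the split f z = A z - c2  on oDisc
  have hsplit : ∀ z ∈ oDisc, (∑' i, (φ i z - c i) * (starRingEnd ℂ) (c i))
      = (∑' i, φ i z * (starRingEnd ℂ) (c i)) - ((c2 : ℝ) : ℂ) := by
    intro z hz
    rw [← hScsum, ← Summable.tsum_sub (hSA z hz) hSc]
    exact tsum_congr fun i => by ring
  have hfactor : ∀ z ∈ oDisc, (∑' i, (φ i z - c i) * (starRingEnd ℂ) (c i))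
      = (z - 1) * ∑' i, g i z * (starRingEnd ℂ) (c i) := by
    intro z hz
    rw [← tsum_mul_left]
    apply tsum_congr
    intro i
    rw [hdec i z hz]
    ring

  -- ## uniform convergence: differentiability and continuity of f and G
  set fF : ℂ → ℂ := fun z => ∑' i, (φ i z - c i) * (starRingEnd ℂ) (c i) with hfF_def
  set G : ℂ → ℂ := fun z => ∑' i, g i z * (starRingEnd ℂ) (c i) with hG_def
  have hsqrtMg_sq : Summable (fun i => Real.sqrt (Mg i) ^ 2) := by
    apply hMg_summ.congr
    intro i
    exact (Real.sq_sqrt (hMg0 i)).symm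
  have hclosed_sub : ∀ ρ, ρ ∈ Set.Ioo (0:ℝ) 1 → closedBall (0:ℂ) ρ ⊆ oDisc :=
    fun ρ hρ => closedBall_subset_ball hρ.2
  have hg_bd_ball : ∀ ρ, ρ ∈ Set.Ioo (0:ℝ) 1 → ∀ i, ∀ z ∈ closedBall (0:ℂ) ρ,
      ‖g i z‖ ≤ Real.sqrt (Mg i) * Real.sqrt ((1-ρ^2)⁻¹) := by
    intro ρ hρ i z hzρ
    have hz : z ∈ oDisc := hclosed_sub ρ hρ hzρ
    have hzn : ‖z‖ ≤ ρ := by simpa [mem_closedBall, dist_zero_right] using hzρ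
    have hρ1 : 0 < 1 - ρ^2 := by nlinarith [hρ.1, hρ.2]
    have h1 : ‖g i z‖^2 ≤ Mg i * (1-ρ^2)⁻¹ := by
      refine le_trans (hgsq_bd z hz i) ?_
      apply mul_le_mul_of_nonneg_left ?_ (hMg0 i)
      apply inv_anti₀ hρ1
      nlinarith [norm_nonneg z]
    calc ‖g i z‖ = Real.sqrt (‖g i z‖^2) := (Real.sqrt_sq (norm_nonneg _)).symm
      _ ≤ Real.sqrt (Mg i * (1-ρ^2)⁻¹) := Real.sqrt_le_sqrt h1
      _ = Real.sqrt (Mg i) * Real.sqrt ((1-ρ^2)⁻¹) := Real.sqrt_mul (hMg0 i) _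
  have hGdc : DifferentiableOn ℂ G oDisc ∧ ContinuousOn G oDisc := by
    rw [hG_def]
    apply tsum_diffOn (h := fun i z => g i z * (starRingEnd ℂ) (c i))
      (fun i => (hgdiff i).mul (differentiableOn_const _))
    intro ρ hρ
    refine ⟨fun i => Real.sqrt (Mg i) * ‖c i‖ * Real.sqrt ((1-ρ^2)⁻¹),
      (summable_mul_of_sq (fun i => Real.sqrt_nonneg _) (fun i => norm_nonneg _)
        hsqrtMg_sq hc2_summ).mul_right _, ?_⟩
    intro i z hzρ
    rw [norm_mul, RCLike.norm_conj]
    calc ‖g i z‖ * ‖c i‖ ≤ (Real.sqrt (Mg i) * Real.sqrt ((1-ρ^2)⁻¹)) * ‖c i‖ :=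
          mul_le_mul_of_nonneg_right (hg_bd_ball ρ hρ i z hzρ) (norm_nonneg _)
      _ = Real.sqrt (Mg i) * ‖c i‖ * Real.sqrt ((1-ρ^2)⁻¹) := by ring
  have hfdc : DifferentiableOn ℂ fF oDisc ∧ ContinuousOn fF oDisc := by
    rw [hfF_def]
    apply tsum_diffOn (h := fun i z => (φ i z - c i) * (starRingEnd ℂ) (c i))
      (fun i => ((hφdiff i).sub (differentiableOn_const _)).mul (differentiableOn_const _))
    intro ρ hρ
    refine ⟨fun i => 2 * (Real.sqrt (Mg i) * ‖c i‖ * Real.sqrt ((1-ρ^2)⁻¹)),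
      ((summable_mul_of_sq (fun i => Real.sqrt_nonneg _) (fun i => norm_nonneg _)
        hsqrtMg_sq hc2_summ).mul_right _).mul_left 2, ?_⟩
    intro i z hzρ
    have hz : z ∈ oDisc := hclosed_sub ρ hρ hzρ
    rw [norm_mul, RCLike.norm_conj, hdec i z hz]
    have h1 : ‖c i + (z - 1) * g i z - c i‖ = ‖z - 1‖ * ‖g i z‖ := by
      rw [show c i + (z - 1) * g i z - c i = (z - 1) * g i z by ring, norm_mul]
    rw [h1]
    have h2 : ‖z - 1‖ ≤ 2 := by
      have := (hoD z).mp hz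
      calc ‖z - 1‖ ≤ ‖z‖ + ‖(1:ℂ)‖ := norm_sub_le _ _
        _ ≤ 2 := by rw [norm_one]; linarith
    have h3 : ‖z - 1‖ * ‖g i z‖ ≤ 2 * (Real.sqrt (Mg i) * Real.sqrt ((1-ρ^2)⁻¹)) :=
      mul_le_mul h2 (hg_bd_ball ρ hρ i z hzρ) (norm_nonneg _) (by norm_num)
    calc ‖z - 1‖ * ‖g i z‖ * ‖c i‖
        ≤ 2 * (Real.sqrt (Mg i) * Real.sqrt ((1-ρ^2)⁻¹)) * ‖c i‖ :=
          mul_le_mul_of_nonneg_right h3 (norm_nonneg _)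
      _ = 2 * (Real.sqrt (Mg i) * ‖c i‖ * Real.sqrt ((1-ρ^2)⁻¹)) := by ring
  -- ## pointwise norm bounds
  have hA_le : ∀ z ∈ oDisc, ‖∑' i, φ i z * (starRingEnd ℂ) (c i)‖ ≤ 1 := by
    intro z hz
    have hnorms : Summable (fun i => ‖φ i z * (starRingEnd ℂ) (c i)‖) :=
      (hSφ_mul z hz).congr (fun i => by rw [norm_mul, RCLike.norm_conj])
    refine le_trans (norm_tsum_le_tsum_norm hnorms) ?_
    have h1 : (∑' i, ‖φ i z * (starRingEnd ℂ) (c i)‖) = ∑' i, ‖φ i z‖ * ‖c i‖ :=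
      tsum_congr fun i => by rw [norm_mul, RCLike.norm_conj]
    rw [h1]
    refine le_trans (tsum_mul_le_sqrt (fun i => norm_nonneg _) (fun i => norm_nonneg _)
      (hφsq_summ z hz) hc2_summ) ?_
    have s1 : Real.sqrt (∑' i, ‖φ i z‖^2) ≤ 1 := Real.sqrt_le_one.mpr (hφsq_le1 z hz)
    have s2 : Real.sqrt (∑' i, ‖c i‖^2) ≤ 1 := Real.sqrt_le_one.mpr hc2_le1
    calc Real.sqrt (∑' i, ‖φ i z‖^2) * Real.sqrt (∑' i, ‖c i‖^2) ≤ 1 * 1 :=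
          mul_le_mul s1 s2 (Real.sqrt_nonneg _) (by norm_num)
      _ = 1 := by norm_num
  have hf_le2 : ∀ z ∈ oDisc, ‖fF z‖ ≤ 2 := by
    intro z hz
    simp only [hfF_def]
    rw [hsplit z hz]
    calc ‖(∑' i, φ i z * (starRingEnd ℂ) (c i)) - ((c2:ℝ):ℂ)‖
        ≤ ‖∑' i, φ i z * (starRingEnd ℂ) (c i)‖ + ‖((c2:ℝ):ℂ)‖ := norm_sub_le _ _
      _ ≤ 1 + 1 := by
          apply add_le_add (hA_le z hz)
          rw [Complex.norm_real, Real.norm_eq_abs, _root_.abs_of_nonneg hc2_nonneg]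
          exact hc2_le1
      _ = 2 := by norm_num
  -- squared pointwise bounds
  have hGpt : ∀ z ∈ oDisc, ‖G z‖^2 ≤ c2 * ∑' i, ‖g i z‖^2 := by
    intro z hz
    simp only [hG_def]
    have hnorms : Summable (fun i => ‖g i z * (starRingEnd ℂ) (c i)‖) :=
      (hSg_mul z hz).congr (fun i => (hgc_norm z hz i).symm)
    have h1 : ‖G z‖ ≤ Real.sqrt (∑' i, ‖g i z‖^2) * Real.sqrt c2 := by
      refine le_trans (norm_tsum_le_tsum_norm hnorms) ?_
      rw [tsum_congr (hgc_norm z hz)]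
      exact tsum_mul_le_sqrt (fun i => norm_nonneg _) (fun i => norm_nonneg _)
        (hgsq_summ z hz) hc2_summ
    have h2 := pow_le_pow_left₀ (norm_nonneg _) h1 2
    rw [mul_pow, Real.sq_sqrt (tsum_nonneg fun i => sq_nonneg _),
      Real.sq_sqrt hc2_nonneg] at h2
    calc ‖G z‖^2 ≤ (∑' i, ‖g i z‖^2) * c2 := h2
      _ = c2 * ∑' i, ‖g i z‖^2 := by ring
  have hApt : ∀ z ∈ oDisc, ‖∑' i, φ i z * (starRingEnd ℂ) (c i)‖^2
      ≤ c2 * ∑' i, ‖φ i z‖^2 := by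
    intro z hz
    have hnorms : Summable (fun i => ‖φ i z * (starRingEnd ℂ) (c i)‖) :=
      (hSφ_mul z hz).congr (fun i => by rw [norm_mul, RCLike.norm_conj])
    have h1 : ‖∑' i, φ i z * (starRingEnd ℂ) (c i)‖
        ≤ Real.sqrt (∑' i, ‖φ i z‖^2) * Real.sqrt c2 := by
      refine le_trans (norm_tsum_le_tsum_norm hnorms) ?_
      rw [tsum_congr (fun i => by rw [norm_mul, RCLike.norm_conj] :
        ∀ i, ‖φ i z * (starRingEnd ℂ) (c i)‖ = ‖φ i z‖ * ‖c i‖)]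
      exact tsum_mul_le_sqrt (fun i => norm_nonneg _) (fun i => norm_nonneg _)
        (hφsq_summ z hz) hc2_summ
    have h2 := pow_le_pow_left₀ (norm_nonneg _) h1 2
    rw [mul_pow, Real.sq_sqrt (tsum_nonneg fun i => sq_nonneg _),
      Real.sq_sqrt hc2_nonneg] at h2
    calc ‖∑' i, φ i z * (starRingEnd ℂ) (c i)‖^2 ≤ (∑' i, ‖φ i z‖^2) * c2 := h2
      _ = c2 * ∑' i, ‖φ i z‖^2 := by ring

  -- ## ENNReal bounds
  set C' : ℝ≥0∞ := ENNReal.ofReal c2 with hC'_def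
  have hC'top : C' ≠ ⊤ := ENNReal.ofReal_ne_top
  have hC'le1 : C' ≤ 1 := ENNReal.ofReal_le_one.mpr hc2_le1
  -- h2E G
  have hGptE : ∀ z ∈ oDisc, ENNReal.ofReal (‖G z‖^2)
      ≤ C' * ∑' i, ENNReal.ofReal (‖g i z‖^2) := by
    intro z hz
    calc ENNReal.ofReal (‖G z‖^2) ≤ ENNReal.ofReal (c2 * ∑' i, ‖g i z‖^2) :=
          ENNReal.ofReal_le_ofReal (hGpt z hz)
      _ = C' * ENNReal.ofReal (∑' i, ‖g i z‖^2) := ENNReal.ofReal_mul hc2_nonneg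
      _ = C' * ∑' i, ENNReal.ofReal (‖g i z‖^2) := by
          rw [ENNReal.ofReal_tsum_of_nonneg (fun i => sq_nonneg _) (hgsq_summ z hz)]
  have hG_h2E : h2E G ≤ C' * ∑' i, h2E (g i) := by
    apply h2E_le_s10
    intro r hr
    exact mean_bound hgcont hGdc.2 hC'top hGptE hr
  -- h2E fF via A
  set A : ℂ → ℂ := fun z => fF z + ((c2:ℝ):ℂ) with hA_def
  have hAcont : ContinuousOn A oDisc := by
    rw [hA_def]; exact hfdc.2.add continuousOn_const
  have hAeq : ∀ z ∈ oDisc, A z = ∑' i, φ i z * (starRingEnd ℂ) (c i) := by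
    intro z hz
    simp only [hA_def, hfF_def]
    rw [hsplit z hz]
    ring
  have hAptE : ∀ z ∈ oDisc, ENNReal.ofReal (‖A z‖^2)
      ≤ C' * ∑' i, ENNReal.ofReal (‖φ i z‖^2) := by
    intro z hz
    rw [hAeq z hz]
    calc ENNReal.ofReal (‖∑' i, φ i z * (starRingEnd ℂ) (c i)‖^2)
        ≤ ENNReal.ofReal (c2 * ∑' i, ‖φ i z‖^2) := ENNReal.ofReal_le_ofReal (hApt z hz)
      _ = C' * ENNReal.ofReal (∑' i, ‖φ i z‖^2) := ENNReal.ofReal_mul hc2_nonneg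
      _ = C' * ∑' i, ENNReal.ofReal (‖φ i z‖^2) := by
          rw [ENNReal.ofReal_tsum_of_nonneg (fun i => sq_nonneg _) (hφsq_summ z hz)]
  have hmrA : ∀ r ∈ Set.Ioo (0:ℝ) 1, ENNReal.ofReal (mr A r) ≤ C' * ∑' i, h2E (φ i) :=
    fun r hr => mean_bound hφcont hAcont hC'top hAptE hr
  -- real inequality between the means of fF and A
  have hmr_f : ∀ r ∈ Set.Ioo (0:ℝ) 1, mr fF r ≤ (1 + c2) * mr A r + (c2 + c2^2) := by
    intro r hr
    have hfApt : ∀ θ : ℝ, ‖fF (circleMap 0 r θ)‖^2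
        ≤ (1 + c2) * ‖A (circleMap 0 r θ)‖^2 + (c2 + c2^2) := by
      intro θ
      set z := circleMap 0 r θ
      have he : fF z = A z - ((c2:ℝ):ℂ) := by simp [hA_def]
      have hn : ‖fF z‖ ≤ ‖A z‖ + c2 := by
        rw [he]
        refine le_trans (norm_sub_le _ _) ?_
        rw [Complex.norm_real, Real.norm_eq_abs, _root_.abs_of_nonneg hc2_nonneg]
      have hsq := mul_self_le_mul_self (norm_nonneg (fF z))
        (le_trans hn (le_refl _))
      nlinarith [sq_nonneg (‖A z‖ - 1), hc2_nonneg, norm_nonneg (A z), norm_nonneg (fF z),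
        mul_nonneg hc2_nonneg (sq_nonneg (‖A z‖ - 1)), hn]
    have hif : IntervalIntegrable (fun θ => ‖fF (circleMap 0 r θ)‖^2) volume 0 (2*Real.pi) :=
      (((cont_circle hfdc.2 hr).norm).pow 2).intervalIntegrable _ _
    have hiA : IntervalIntegrable (fun θ => (1 + c2) * ‖A (circleMap 0 r θ)‖^2 + (c2 + c2^2))
        volume 0 (2*Real.pi) :=
      ((continuous_const.mul (((cont_circle hAcont hr).norm).pow 2)).add continuous_const).intervalIntegrable _ _
    have h2pi : (0:ℝ) ≤ 2 * Real.pi := by positivity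
    have hint : (∫ θ in (0:ℝ)..(2*Real.pi), ‖fF (circleMap 0 r θ)‖^2)
        ≤ ∫ θ in (0:ℝ)..(2*Real.pi), ((1 + c2) * ‖A (circleMap 0 r θ)‖^2 + (c2 + c2^2)) :=
      intervalIntegral.integral_mono_on h2pi hif hiA (fun θ _ => hfApt θ)
    have hrhs : (∫ θ in (0:ℝ)..(2*Real.pi), ((1 + c2) * ‖A (circleMap 0 r θ)‖^2 + (c2 + c2^2)))
        = (1 + c2) * (∫ θ in (0:ℝ)..(2*Real.pi), ‖A (circleMap 0 r θ)‖^2)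
          + (2*Real.pi) * (c2 + c2^2) := by
      rw [intervalIntegral.integral_add (f := fun θ => (1 + c2) * ‖A (circleMap 0 r θ)‖^2)
        (g := fun _ => c2 + c2^2)
        ((((cont_circle hAcont hr).norm).pow 2).intervalIntegrable _ _ |>.const_mul _)
        (intervalIntegrable_const),
        intervalIntegral.integral_const_mul, intervalIntegral.integral_const]
      simp [smul_eq_mul]
    have hπ : (0:ℝ) < 2 * Real.pi := by positivity
    rw [mr, mr]
    calc (2*Real.pi)⁻¹ * (∫ θ in (0:ℝ)..(2*Real.pi), ‖fF (circleMap 0 r θ)‖^2)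
        ≤ (2*Real.pi)⁻¹ * ((1 + c2) * (∫ θ in (0:ℝ)..(2*Real.pi), ‖A (circleMap 0 r θ)‖^2)
          + (2*Real.pi) * (c2 + c2^2)) := by
          apply mul_le_mul_of_nonneg_left ?_ (by positivity)
          rw [← hrhs]; exact hint
      _ = (1 + c2) * ((2*Real.pi)⁻¹ * ∫ θ in (0:ℝ)..(2*Real.pi), ‖A (circleMap 0 r θ)‖^2)
          + (c2 + c2^2) := by
          field_simp
  -- ENNReal bound for h2E fF
  have hf_h2E : h2E fF ≤ (1 + C') * (C' * ∑' i, h2E (φ i)) + (C' + C'^2) := by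
    apply h2E_le_s10
    intro r hr
    calc ENNReal.ofReal (mr fF r)
        ≤ ENNReal.ofReal ((1 + c2) * mr A r + (c2 + c2^2)) :=
          ENNReal.ofReal_le_ofReal (hmr_f r hr)
      _ ≤ ENNReal.ofReal ((1 + c2) * mr A r) + ENNReal.ofReal (c2 + c2^2) :=
          ENNReal.ofReal_add_le
      _ = ENNReal.ofReal (1 + c2) * ENNReal.ofReal (mr A r) + ENNReal.ofReal (c2 + c2^2) := by
          rw [ENNReal.ofReal_mul (by positivity)]
      _ ≤ (1 + C') * (C' * ∑' i, h2E (φ i)) + (C' + C'^2) := by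
          apply add_le_add
          · apply mul_le_mul'
            · rw [ENNReal.ofReal_add (by norm_num) hc2_nonneg, ENNReal.ofReal_one]
            · exact hmrA r hr
          · rw [ENNReal.ofReal_add hc2_nonneg (by positivity), ENNReal.ofReal_pow hc2_nonneg]
  -- ## final assembly
  refine ⟨hSf, hfdc.1, hf_le2, G, ⟨hGdc.1, ?_⟩, hfactor, ?_⟩
  · apply lt_of_le_of_lt hG_h2E
    calc C' * ∑' i, h2E (g i) ≤ 1 * 1 := mul_le_mul' hC'le1 hSg_le
      _ < ⊤ := by norm_num
  · calc h2E fF + h2E G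
        ≤ ((1 + C') * (C' * ∑' i, h2E (φ i)) + (C' + C'^2)) + C' * ∑' i, h2E (g i) :=
          add_le_add hf_h2E hG_h2E
      _ ≤ ((1 + 1) * (1 * ∑' i, h2E (φ i)) + (1 + 1^2)) + 1 * ∑' i, h2E (g i) := by
          apply add_le_add
          · apply add_le_add
            · exact mul_le_mul' (add_le_add le_rfl hC'le1) (mul_le_mul' hC'le1 le_rfl)
            · exact add_le_add hC'le1 (pow_le_pow_left' hC'le1 2)
          · exact mul_le_mul' hC'le1 le_rfl
      _ = 2 * (∑' i, h2E (φ i)) + (∑' i, h2E (g i)) + 2 := by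
          simp only [one_mul, one_pow]
          ring
      _ ≤ 2 * ((∑' i, h2E (φ i)) + (∑' i, h2E (g i))) + 2 := by
          apply add_le_add ?_ le_rfl
          rw [mul_add]
          apply add_le_add le_rfl
          calc (∑' i, h2E (g i)) = 1 * (∑' i, h2E (g i)) := (one_mul _).symm
            _ ≤ 2 * (∑' i, h2E (g i)) := mul_le_mul' (by norm_num) le_rfl
      _ ≤ 2 * 1 + 2 := by
          apply add_le_add ?_ le_rfl
          exact mul_le_mul' le_rfl hsum_split
      _ = 4 := by norm_num
end
end
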